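/- For |z| < 1, Σ_{m=1}^∞ (2z)^{2m}/binom(2m,m) · m = z(z√(1−z²)·3 + arcsin(z)·(2z²+1))/(2(1−z²)^{5/2}) (the case n = 1 of Lehmer's formula, using p_1(x) = 3 and q_1(x) = 2x+1). -/

import Mathlib

/-!
Wallis' integral `∫₀¹ (1 - s²)ⁿ ds = 4ⁿ / ((2n + 1) C(2n, n))` turns the `n`-th term into
`∫₀¹ n (2n + 1) wⁿ ds` with `w = z² (1 - s²)`. Since `0 ≤ w ≤ z² < 1`, dominated convergence moves
the sum inside the integral, where `∑ n (2n + 1) wⁿ = w (3 + w) / (1 - w)³` is rational. What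
remains is an elementary integral in `s`; its primitive has an `arctan (z s / √(1 - z²))` part,
which at `s = 1` is `arcsin z`.
-/

open Real intervalIntegral

lemma two_mul_add_three_mul_integral_one_sub_sq_pow_succ (n : ℕ) :
    (2 * n + 3 : ℝ) * ∫ s in (0 : ℝ)..1, (1 - s ^ 2) ^ (n + 1) =
      (2 * n + 2) * ∫ s in (0 : ℝ)..1, (1 - s ^ 2) ^ n := by
  have hderiv (s : ℝ) : HasDerivAt (fun s : ℝ => s * (1 - s ^ 2) ^ (n + 1))
      ((2 * n + 3) * (1 - s ^ 2) ^ (n + 1) - (2 * n + 2) * (1 - s ^ 2) ^ n) s := by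
    refine ((hasDerivAt_id s).mul (((hasDerivAt_pow 2 s).const_sub 1).pow (n + 1))).congr_deriv ?_
    simp only [id, Pi.pow_apply, Nat.add_sub_cancel]
    push_cast
    ring
  have hint (k : ℕ) : IntervalIntegrable (fun s : ℝ => (1 - s ^ 2) ^ k) MeasureTheory.volume 0 1 :=
    (by fun_prop : Continuous fun s : ℝ => (1 - s ^ 2) ^ k).intervalIntegrable 0 1
  have hftc := integral_eq_sub_of_hasDerivAt (fun s _ => hderiv s)
    (((hint (n + 1)).const_mul _).sub ((hint n).const_mul _))
  rw [integral_sub ((hint (n + 1)).const_mul _) ((hint n).const_mul _),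
    integral_const_mul, integral_const_mul] at hftc
  norm_num at hftc
  linarith

lemma two_mul_add_one_mul_centralBinom_mul_integral_one_sub_sq_pow (n : ℕ) :
    (2 * n + 1 : ℝ) * n.centralBinom * ∫ s in (0 : ℝ)..1, (1 - s ^ 2) ^ n = 4 ^ n := by
  induction n with
  | zero => simp
  | succ n ih =>
    have hrec : ((n + 1) * (n + 1).centralBinom : ℝ) = 2 * (2 * n + 1) * n.centralBinom := by
      exact_mod_cast n.succ_mul_centralBinom_succ
    have hstep := two_mul_add_three_mul_integral_one_sub_sq_pow_succ n
    refine mul_left_cancel₀ (show (n + 1 : ℝ) ≠ 0 by positivity) ?_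
    push_cast
    linear_combination ((n : ℝ) + 1) * ((n + 1).centralBinom : ℝ) * hstep
      + (2 * n + 2) * (∫ s in (0 : ℝ)..1, (1 - s ^ 2) ^ n) * hrec + 4 * ((n : ℝ) + 1) * ih

lemma two_mul_pow_div_centralBinom_mul_eq_integral (z : ℝ) (n : ℕ) :
    (2 * z) ^ (2 * n) / n.centralBinom * n =
      ∫ s in (0 : ℝ)..1, n * (2 * n + 1) * (z ^ 2 * (1 - s ^ 2)) ^ n := by
  have hwallis := two_mul_add_one_mul_centralBinom_mul_integral_one_sub_sq_pow n
  have hcb : (n.centralBinom : ℝ) ≠ 0 := by exact_mod_cast n.centralBinom_ne_zero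
  have hpow : (2 * z) ^ (2 * n) = 4 ^ n * (z ^ 2) ^ n := by
    rw [pow_mul, mul_pow, mul_pow]
    norm_num
  rw [hpow]
  simp_rw [mul_pow (z ^ 2), ← mul_assoc]
  rw [integral_const_mul, div_mul_eq_mul_div, div_eq_iff hcb]
  linear_combination (-(n : ℝ) * (z ^ 2) ^ n) * hwallis

lemma hasSum_succ_mul_two_mul_add_three_mul_pow_succ {𝕜 : Type*} [NormedField 𝕜]
    [HasSummableGeomSeries 𝕜] {w : 𝕜} (hw : ‖w‖ < 1) :
    HasSum (fun m : ℕ => (m + 1) * (2 * m + 3) * w ^ (m + 1)) (w * (3 + w) / (1 - w) ^ 3) := by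
  have hw1 : 1 - w ≠ 0 := by
    rw [sub_ne_zero]
    rintro rfl
    simp at hw
  -- proved in `ℕ` and cast, since `𝕜` may have positive characteristic
  have hcoeff (m : ℕ) : ((m + 1) * (2 * m + 3) : 𝕜) = 4 * (m + 2).choose 2 - (m + 1).choose 1 := by
    have h := Nat.choose_succ_right_eq (m + 2) 1
    norm_num at h
    rw [eq_sub_iff_add_eq, Nat.choose_one_right]
    have hnat : (m + 1) * (2 * m + 3) + (m + 1) = 4 * (m + 2).choose 2 := by linarith
    simpa using congrArg (Nat.cast (R := 𝕜)) hnat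
  have h := (((hasSum_choose_mul_geometric_of_norm_lt_one 2 hw).mul_left 4).sub
    (hasSum_choose_mul_geometric_of_norm_lt_one 1 hw)).mul_left w
  rw [show w * (3 + w) / (1 - w) ^ 3 = w * (4 * (1 / (1 - w) ^ (2 + 1)) - 1 / (1 - w) ^ (1 + 1)) by
    field_simp; ring]
  refine h.congr_fun fun m => ?_
  rw [hcoeff]
  ring

lemma hasSum_integral_succ_mul_two_mul_add_three_mul_pow_succ {a : ℝ} (ha : |a| < 1) :
    HasSum (fun m : ℕ => ∫ s in (0 : ℝ)..1, (m + 1) * (2 * m + 3) * (a * (1 - s ^ 2)) ^ (m + 1))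
      (∫ s in (0 : ℝ)..1, a * (1 - s ^ 2) * (3 + a * (1 - s ^ 2)) / (1 - a * (1 - s ^ 2)) ^ 3) := by
  have habs_le {s : ℝ} (hs : s ∈ Set.uIoc 0 1) : |a * (1 - s ^ 2)| ≤ |a| := by
    rw [Set.uIoc_of_le zero_le_one] at hs
    rw [abs_mul]
    exact mul_le_of_le_one_right (abs_nonneg a)
      (abs_le.2 ⟨by nlinarith [hs.1, hs.2], by nlinarith⟩)
  have hbound := hasSum_succ_mul_two_mul_add_three_mul_pow_succ
    (show ‖|a|‖ < 1 by rwa [norm_abs_eq_norm, norm_eq_abs])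
  refine intervalIntegral.hasSum_integral_of_dominated_convergence
    (fun m _ => (m + 1) * (2 * m + 3) * |a| ^ (m + 1))
    (fun m => Continuous.aestronglyMeasurable (by fun_prop)) (fun m => .of_forall fun s hs => ?_)
    (.of_forall fun _ _ => hbound.summable) intervalIntegrable_const
    (.of_forall fun s hs =>
      hasSum_succ_mul_two_mul_add_three_mul_pow_succ ((habs_le hs).trans_lt ha))
  rw [norm_mul, norm_pow, norm_eq_abs, norm_eq_abs,
    abs_of_nonneg (a := ((m : ℝ) + 1) * (2 * m + 3)) (by positivity)]
  exact mul_le_mul_of_nonneg_left (pow_le_pow_left₀ (abs_nonneg _) (habs_le hs) _) (by positivity)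

noncomputable def lehmerPrimitive (z s : ℝ) : ℝ :=
  s * ((5 * z ^ 2 - 2) * (1 - z ^ 2 + z ^ 2 * s ^ 2) + 2 * (1 - z ^ 2)) /
      (2 * (1 - z ^ 2) ^ 2 * (1 - z ^ 2 + z ^ 2 * s ^ 2) ^ 2) +
    z * (2 * z ^ 2 + 1) / (2 * (1 - z ^ 2) ^ 2 * √(1 - z ^ 2)) * arctan (z * s / √(1 - z ^ 2))

lemma hasDerivAt_lehmerPrimitive {z : ℝ} (hz : |z| < 1) (s : ℝ) :
    HasDerivAt (lehmerPrimitive z)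
      (z ^ 2 * (1 - s ^ 2) * (3 + z ^ 2 * (1 - s ^ 2)) / (1 - z ^ 2 * (1 - s ^ 2)) ^ 3) s := by
  have hc : 0 < 1 - z ^ 2 := by rwa [sub_pos, sq_lt_one_iff_abs_lt_one]
  set c := 1 - z ^ 2
  set r := √c
  have hr : 0 < r := sqrt_pos.2 hc
  have hr2 : r ^ 2 = c := sq_sqrt hc.le
  have hqd : HasDerivAt (fun s => c + z ^ 2 * s ^ 2) (z ^ 2 * (2 * s)) s := by
    simpa using ((hasDerivAt_pow 2 s).const_mul (z ^ 2)).const_add c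
  have hrat := ((hasDerivAt_id s).mul ((hqd.const_mul (5 * z ^ 2 - 2)).add_const (2 * c))).div
    ((hqd.pow 2).const_mul (2 * c ^ 2)) (by simp only [Pi.pow_apply]; positivity)
  have harctan := (((hasDerivAt_id s).const_mul z).div_const r).arctan.const_mul
    (z * (2 * z ^ 2 + 1) / (2 * c ^ 2 * r))
  refine (hrat.add harctan).congr_deriv ?_
  simp only [id, Pi.pow_apply, Pi.mul_apply]
  rw [show 1 - z ^ 2 * (1 - s ^ 2) = c + z ^ 2 * s ^ 2 by ring]
  field_simp
  rw [hr2]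
  ring

lemma integral_lehmer {z : ℝ} (hz : |z| < 1) :
    ∫ s in (0 : ℝ)..1, z ^ 2 * (1 - s ^ 2) * (3 + z ^ 2 * (1 - s ^ 2)) / (1 - z ^ 2 * (1 - s ^ 2)) ^ 3
      = z * (3 * (z * √(1 - z ^ 2)) + arcsin z * (2 * z ^ 2 + 1)) /
        (2 * (1 - z ^ 2) ^ ((5 : ℝ) / 2)) := by
  have hc : 0 < 1 - z ^ 2 := by rwa [sub_pos, sq_lt_one_iff_abs_lt_one]
  have hcont : Continuous fun s : ℝ =>
      z ^ 2 * (1 - s ^ 2) * (3 + z ^ 2 * (1 - s ^ 2)) / (1 - z ^ 2 * (1 - s ^ 2)) ^ 3 := by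
    refine .div (by fun_prop) (by fun_prop) fun s => ?_
    rw [show 1 - z ^ 2 * (1 - s ^ 2) = 1 - z ^ 2 + z ^ 2 * s ^ 2 by ring]
    positivity
  rw [integral_eq_sub_of_hasDerivAt (fun s _ => hasDerivAt_lehmerPrimitive hz s)
    (hcont.intervalIntegrable 0 1)]
  have hpow : (1 - z ^ 2) ^ ((5 : ℝ) / 2) = (1 - z ^ 2) ^ 2 * √(1 - z ^ 2) := by
    rw [show (5 : ℝ) / 2 = (2 : ℕ) + 1 / 2 by norm_num, rpow_add hc, rpow_natCast, sqrt_eq_rpow]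
  rw [arcsin_eq_arctan (abs_lt.1 hz), hpow]
  simp only [lehmerPrimitive, mul_zero, zero_mul, zero_div, arctan_zero]
  field_simp
  ring

theorem zetaCB_neg_one (z : ℝ) (hz : |z| < 1) :
    ∑' m : ℕ, (2 * z) ^ (2 * (m + 1)) / (Nat.choose (2 * (m + 1)) (m + 1) : ℝ) * ((m : ℝ) + 1) =
      z * (3 * (z * Real.sqrt (1 - z ^ 2)) + Real.arcsin z * (2 * z ^ 2 + 1)) /
        (2 * (1 - z ^ 2) ^ ((5 : ℝ) / 2)) := by
  have hz2 : |z ^ 2| < 1 := by rwa [abs_of_nonneg (sq_nonneg z), sq_lt_one_iff_abs_lt_one]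
  rw [← integral_lehmer hz]
  refine ((hasSum_integral_succ_mul_two_mul_add_three_mul_pow_succ hz2).congr_fun
    fun m => ?_).tsum_eq
  have hterm := two_mul_pow_div_centralBinom_mul_eq_integral z (m + 1)
  push_cast at hterm
  rw [← Nat.centralBinom, hterm]
  ring_nf
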